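/- The global maximum of the Gaussian scale space is nonincreasing in scale: if z : ℝⁿ → ℝ is bounded and continuous, then for all scales 0 < s ≤ t, sup_{x ∈ ℝⁿ} (G_t ⋆ z)(x) ≤ sup_{x ∈ ℝⁿ} (G_s ⋆ z)(x), and likewise inf_{x ∈ ℝⁿ} (G_t ⋆ z)(x) ≥ inf_{x ∈ ℝⁿ} (G_s ⋆ z)(x). -/

import Mathlib

/-!
The Gaussian kernels form a convolution semigroup, `G_a ⋆ G_b = G_(a+b)` (complete the square in
the exponent), so `G_t ⋆ z = G_(t-s) ⋆ (G_s ⋆ z)`. Convolution with the probability density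
`G_(t-s)` averages the bounded function `G_s ⋆ z`, and an average lies between the infimum and the
supremum of what is averaged.
-/

open MeasureTheory Real

/-- The Gaussian kernel at scale `t` on `ℝⁿ`: `G_t(x) = (π t)^(−n/2) · exp(−‖x‖²/t)`. -/
noncomputable def gaussKernel (n : ℕ) (t : ℝ) (x : EuclideanSpace ℝ (Fin n)) : ℝ :=
  (Real.pi * t) ^ (-(n : ℝ) / 2) * Real.exp (-‖x‖ ^ 2 / t)

/-- Gaussian blur of `z` at scale `t`: `(G_t ⋆ z)(x) = ∫ G_t(x − y) z(y) dy`. -/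
noncomputable def gaussBlur (n : ℕ) (t : ℝ) (z : EuclideanSpace ℝ (Fin n) → ℝ)
    (x : EuclideanSpace ℝ (Fin n)) : ℝ :=
  ∫ y, gaussKernel n t (x - y) * z y

open scoped Convolution
open ContinuousLinearMap (mul)

section Order

variable {G : Type*} [Sub G] [MeasurableSpace G] {μ : Measure G} {f g : G → ℝ} {C M : ℝ} {x : G}

theorem convolution_mul_le_of_le (hf0 : ∀ y, 0 ≤ f y) (hf1 : ∫ y, f y ∂μ = 1)
    (hfg : ConvolutionExistsAt f g x (mul ℝ ℝ) μ) (hg : ∀ y, g y ≤ M) :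
    (f ⋆[mul ℝ ℝ, μ] g) x ≤ M :=
  calc (f ⋆[mul ℝ ℝ, μ] g) x = ∫ t, f t * g (x - t) ∂μ := convolution_mul
    _ ≤ ∫ t, f t * M ∂μ :=
      integral_mono hfg ((Integrable.of_integral_ne_zero (hf1 ▸ one_ne_zero)).mul_const M)
        fun t => mul_le_mul_of_nonneg_left (hg _) (hf0 t)
    _ = M := by rw [integral_mul_const, hf1, one_mul]

theorem le_convolution_mul_of_le (hf0 : ∀ y, 0 ≤ f y) (hf1 : ∫ y, f y ∂μ = 1)
    (hfg : ConvolutionExistsAt f g x (mul ℝ ℝ) μ) (hg : ∀ y, M ≤ g y) :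
    M ≤ (f ⋆[mul ℝ ℝ, μ] g) x :=
  calc M = ∫ t, f t * M ∂μ := by rw [integral_mul_const, hf1, one_mul]
    _ ≤ ∫ t, f t * g (x - t) ∂μ :=
      integral_mono ((Integrable.of_integral_ne_zero (hf1 ▸ one_ne_zero)).mul_const M) hfg
        fun t => mul_le_mul_of_nonneg_left (hg _) (hf0 t)
    _ = (f ⋆[mul ℝ ℝ, μ] g) x := convolution_mul.symm

theorem abs_convolution_mul_le (hf0 : ∀ y, 0 ≤ f y) (hf1 : ∫ y, f y ∂μ = 1)
    (hfg : ConvolutionExistsAt f g x (mul ℝ ℝ) μ) (hgC : ∀ y, |g y| ≤ C) :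
    |(f ⋆[mul ℝ ℝ, μ] g) x| ≤ C :=
  abs_le.2 ⟨le_convolution_mul_of_le hf0 hf1 hfg fun y => (abs_le.1 (hgC y)).1,
    convolution_mul_le_of_le hf0 hf1 hfg fun y => (abs_le.1 (hgC y)).2⟩

end Order

section Bounded

variable {G : Type*} [NormedAddCommGroup G] [MeasurableSpace G] [BorelSpace G] {μ : Measure G}
  {f g : G → ℝ} {C : ℝ}

theorem convolutionExistsAt_mul_of_abs_le (hf : Integrable f μ) (hg : Continuous g)
    (hgC : ∀ y, |g y| ≤ C) (x : G) : ConvolutionExistsAt f g x (mul ℝ ℝ) μ :=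
  hf.mul_bdd (hg.comp (continuous_const.sub continuous_id)).aestronglyMeasurable
    (ae_of_all _ fun _ => hgC _)

theorem continuous_convolution_mul_of_abs_le (hf : Integrable f μ) (hg : Continuous g)
    (hgC : ∀ y, |g y| ≤ C) : Continuous (f ⋆[mul ℝ ℝ, μ] g) :=
  BddAbove.continuous_convolution_right_of_integrable _
    ⟨C, by rintro _ ⟨y, rfl⟩; exact hgC y⟩ hf hg

theorem iSup_convolution_mul_le [Nonempty G] (hf0 : ∀ y, 0 ≤ f y) (hf1 : ∫ y, f y ∂μ = 1)
    (hg : Continuous g) (hgC : ∀ y, |g y| ≤ C) :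
    ⨆ x, (f ⋆[mul ℝ ℝ, μ] g) x ≤ ⨆ y, g y :=
  have hf : Integrable f μ := .of_integral_ne_zero (hf1 ▸ one_ne_zero)
  ciSup_le fun x => convolution_mul_le_of_le hf0 hf1 (convolutionExistsAt_mul_of_abs_le hf hg hgC x)
    fun y => le_ciSup ⟨C, by rintro _ ⟨y, rfl⟩; exact (abs_le.1 (hgC y)).2⟩ _

theorem iInf_le_convolution_mul [Nonempty G] (hf0 : ∀ y, 0 ≤ f y) (hf1 : ∫ y, f y ∂μ = 1)
    (hg : Continuous g) (hgC : ∀ y, |g y| ≤ C) :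
    ⨅ y, g y ≤ ⨅ x, (f ⋆[mul ℝ ℝ, μ] g) x :=
  have hf : Integrable f μ := .of_integral_ne_zero (hf1 ▸ one_ne_zero)
  le_ciInf fun x => le_convolution_mul_of_le hf0 hf1 (convolutionExistsAt_mul_of_abs_le hf hg hgC x)
    fun y => ciInf_le ⟨-C, by rintro _ ⟨y, rfl⟩; exact (abs_le.1 (hgC y)).1⟩ _

end Bounded

section Gaussian

variable {n : ℕ} {a b t C : ℝ} {z : EuclideanSpace ℝ (Fin n) → ℝ}

theorem gaussKernel_nonneg (ht : 0 < t) (x : EuclideanSpace ℝ (Fin n)) :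
    0 ≤ gaussKernel n t x := by
  unfold gaussKernel
  positivity

theorem continuous_gaussKernel : Continuous (gaussKernel n t) := by
  unfold gaussKernel
  fun_prop

theorem integral_gaussKernel (ht : 0 < t) : ∫ x, gaussKernel n t x = 1 := by
  have hexp : ∀ x : EuclideanSpace ℝ (Fin n),
      rexp (-‖x‖ ^ 2 / t) = rexp (-t⁻¹ * ‖x‖ ^ 2) := fun x => by ring_nf
  simp_rw [gaussKernel, hexp]
  rw [integral_const_mul, GaussianFourier.integral_rexp_neg_mul_sq_norm (inv_pos.2 ht),
    finrank_euclideanSpace_fin, div_inv_eq_mul, neg_div, rpow_neg (by positivity),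
    inv_mul_cancel₀ (by positivity)]

theorem integrable_gaussKernel (ht : 0 < t) : Integrable (gaussKernel n t) :=
  Integrable.of_integral_ne_zero ((integral_gaussKernel ht).symm ▸ one_ne_zero)

theorem gaussKernel_mul_gaussKernel (ha : 0 < a) (hb : 0 < b) (x y : EuclideanSpace ℝ (Fin n)) :
    gaussKernel n a y * gaussKernel n b (x - y) =
      gaussKernel n (a + b) x * gaussKernel n (a * b / (a + b)) (y - (a / (a + b)) • x) := by
  have hab : 0 < a + b := add_pos ha hb
  have hconst : (π * a) ^ (-(n : ℝ) / 2) * (π * b) ^ (-(n : ℝ) / 2) =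
      (π * (a + b)) ^ (-(n : ℝ) / 2) * (π * (a * b / (a + b))) ^ (-(n : ℝ) / 2) := by
    rw [← mul_rpow (by positivity) (by positivity), ← mul_rpow (by positivity) (by positivity)]
    congr 1
    field_simp
  have hexp : -‖y‖ ^ 2 / a + -‖x - y‖ ^ 2 / b =
      -‖x‖ ^ 2 / (a + b) + -‖y - (a / (a + b)) • x‖ ^ 2 / (a * b / (a + b)) := by
    rw [norm_sub_sq_real, norm_sub_sq_real, norm_smul, real_inner_smul_right, real_inner_comm,
      Real.norm_of_nonneg (by positivity)]
    field_simp
    ring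
  simp only [gaussKernel]
  calc _ = ((π * a) ^ (-(n : ℝ) / 2) * (π * b) ^ (-(n : ℝ) / 2)) *
        rexp (-‖y‖ ^ 2 / a + -‖x - y‖ ^ 2 / b) := by rw [exp_add]; ring
    _ = _ := by rw [hconst, hexp, exp_add]; ring

theorem gaussKernel_convolution (ha : 0 < a) (hb : 0 < b) :
    gaussKernel n a ⋆[mul ℝ ℝ] gaussKernel n b = gaussKernel n (a + b) := by
  ext x
  rw [convolution_mul]
  simp_rw [gaussKernel_mul_gaussKernel ha hb, integral_const_mul]
  rw [integral_sub_right_eq_self (gaussKernel n (a * b / (a + b))),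
    integral_gaussKernel (by positivity), mul_one]

theorem gaussBlur_eq_convolution : gaussBlur n t z = gaussKernel n t ⋆[mul ℝ ℝ] z :=
  funext fun _ => convolution_mul_swap.symm

theorem continuous_gaussBlur (ht : 0 < t) (hz : Continuous z) (hzC : ∀ y, |z y| ≤ C) :
    Continuous (gaussBlur n t z) := by
  rw [gaussBlur_eq_convolution]
  exact continuous_convolution_mul_of_abs_le (integrable_gaussKernel ht) hz hzC

theorem abs_gaussBlur_le (ht : 0 < t) (hz : Continuous z) (hzC : ∀ y, |z y| ≤ C)
    (x : EuclideanSpace ℝ (Fin n)) : |gaussBlur n t z x| ≤ C := by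
  rw [gaussBlur_eq_convolution]
  exact abs_convolution_mul_le (gaussKernel_nonneg ht) (integral_gaussKernel ht)
    (convolutionExistsAt_mul_of_abs_le (integrable_gaussKernel ht) hz hzC x) hzC

theorem gaussBlur_add (ha : 0 < a) (hb : 0 < b) (hz : Continuous z) (hzC : ∀ y, |z y| ≤ C) :
    gaussBlur n (a + b) z = gaussKernel n b ⋆[mul ℝ ℝ] gaussBlur n a z := by
  have hnorm : ∀ {c : ℝ}, 0 < c → (fun y => ‖gaussKernel n c y‖) = gaussKernel n c :=
    fun hc => funext fun y => Real.norm_of_nonneg (gaussKernel_nonneg hc y)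
  have hzC' : ∀ y, |‖z y‖| ≤ C := by simpa using hzC
  have hGa := integrable_gaussKernel (n := n) ha
  have hGb := integrable_gaussKernel (n := n) hb
  have hinner : ∀ y, |(gaussKernel n a ⋆[mul ℝ ℝ] fun y => ‖z y‖) y| ≤ C := fun y =>
    abs_convolution_mul_le (gaussKernel_nonneg ha) (integral_gaussKernel ha)
      (convolutionExistsAt_mul_of_abs_le hGa hz.norm hzC' y) hzC'
  ext x
  rw [gaussBlur_eq_convolution, gaussBlur_eq_convolution, add_comm,
    ← gaussKernel_convolution hb ha]
  refine convolution_assoc (mul ℝ ℝ) (mul ℝ ℝ) (mul ℝ ℝ) (mul ℝ ℝ) (fun _ _ _ => mul_assoc _ _ _)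
    continuous_gaussKernel.aestronglyMeasurable continuous_gaussKernel.aestronglyMeasurable
    hz.aestronglyMeasurable (hGb.ae_convolution_exists _ hGa)
    (ae_of_all _ (convolutionExistsAt_mul_of_abs_le hGa.norm hz.norm hzC')) ?_
  rw [hnorm hb, hnorm ha]
  exact convolutionExistsAt_mul_of_abs_le hGb
    (continuous_convolution_mul_of_abs_le hGa hz.norm hzC') hinner x

end Gaussian

/-- The global maximum of the Gaussian scale space is nonincreasing in scale,
and the global minimum is nondecreasing: for `0 < s ≤ t`,
`sup_x (G_t ⋆ z)(x) ≤ sup_x (G_s ⋆ z)(x)` and `inf_x (G_t ⋆ z)(x) ≥ inf_x (G_s ⋆ z)(x)`. -/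
theorem gaussian_blur_sup_antitone_inf_monotone (n : ℕ)
    (z : EuclideanSpace ℝ (Fin n) → ℝ)
    (hz : Continuous z) (hb : ∃ C : ℝ, ∀ x, |z x| ≤ C)
    (s t : ℝ) (hs : 0 < s) (hst : s ≤ t) :
    (⨆ x, gaussBlur n t z x) ≤ (⨆ x, gaussBlur n s z x) ∧
      (⨅ x, gaussBlur n s z x) ≤ (⨅ x, gaussBlur n t z x) := by
  obtain ⟨C, hC⟩ := hb
  obtain rfl | hlt := hst.eq_or_lt
  · exact ⟨le_rfl, le_rfl⟩
  have hts : 0 < t - s := sub_pos.2 hlt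
  have hblur : gaussBlur n t z = gaussKernel n (t - s) ⋆[mul ℝ ℝ] gaussBlur n s z := by
    rw [← gaussBlur_add hs hts hz hC, add_sub_cancel]
  rw [hblur]
  exact ⟨iSup_convolution_mul_le (gaussKernel_nonneg hts) (integral_gaussKernel hts)
      (continuous_gaussBlur hs hz hC) (abs_gaussBlur_le hs hz hC),
    iInf_le_convolution_mul (gaussKernel_nonneg hts) (integral_gaussKernel hts)
      (continuous_gaussBlur hs hz hC) (abs_gaussBlur_le hs hz hC)⟩
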